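/- arXiv:2411.05765 — 2 statements merged into one kernel-verified Lean document; each statement's English description precedes it below -/
import Mathlib

section
/- Suppose there exist constants T > e∗, C_T > 1 and θ ∈ (0,1) such that every solution t ↦ x(t) of the evolution family Φ satisfies: (a) |x(t)| ≤ C_T·|x(s)| whenever e∗ ≤ s ≤ t ≤ s∗T, and (b) |x(t)| ≤ θ·sup{|x(u)| : u ∈ J, |u∗t^{∗-1}|∗ ≤ T} for all t ≥ T. Then, with K = θ⁻¹·C_T and α = −ln(θ)/ln(h(T)) (so K ≥ 1 and α > 0), for every solution t ↦ x(t) that is unbounded on [e∗, +∞) there exists T₁ > e∗ such that |x(t)| ≤ K·(h(s)/h(t))^{-α}·|x(s)| for all s ≥ t ≥ T₁. -/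
open Set

noncomputable section

/-- The operation `t ∗ s := h⁻¹ (h t · h s)` on `J`. -/
def star (h hinv : ℝ → ℝ) (t s : ℝ) : ℝ := hinv (h t * h s)

/-- The unit element `e∗ := h⁻¹ 1`. -/
def estar (hinv : ℝ → ℝ) : ℝ := hinv 1

/-- The inverse `t^{∗-1} := h⁻¹ (1 / h t)`. -/
def sinv (h hinv : ℝ → ℝ) (t : ℝ) : ℝ := hinv (1 / h t)

/-- The absolute value `|t|∗ := t` if `e∗ ≤ t` and `t^{∗-1}` otherwise. -/
def absStar (h hinv : ℝ → ℝ) (t : ℝ) : ℝ := if estar hinv ≤ t then t else sinv h hinv t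

/-- `h : J → (0,∞)` is a growth rate: a strictly increasing homeomorphism of
`J = (a₀,∞)` (or `J = ℝ`) onto `(0,∞)`, with (two-sided) inverse `hinv`. -/
structure GrowthRate (J : Set ℝ) (h hinv : ℝ → ℝ) : Prop where
  J_eq : (∃ a₀ : ℝ, J = Set.Ioi a₀) ∨ J = Set.univ
  mono : StrictMonoOn h J
  cont : ContinuousOn h J
  pos : ∀ t ∈ J, 0 < h t
  inv_left : ∀ t ∈ J, hinv (h t) = t
  inv_mem : ∀ y ∈ Set.Ioi (0:ℝ), hinv y ∈ J
  inv_right : ∀ y ∈ Set.Ioi (0:ℝ), h (hinv y) = y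
  inv_cont : ContinuousOn hinv (Set.Ioi 0)

variable {E : Type*} [NormedAddCommGroup E] [NormedSpace ℝ E]

/-- An evolution family on `J`: `Φ t t = I` and `Φ t u ∘ Φ u s = Φ t s`. -/
def IsEvolutionFamily (J : Set ℝ) (Φ : ℝ → ℝ → (E →L[ℝ] E)) : Prop :=
  (∀ t ∈ J, Φ t t = 1) ∧ (∀ t ∈ J, ∀ u ∈ J, ∀ s ∈ J, Φ t u * Φ u s = Φ t s)

/-- `Φ` has a uniform `h`-dichotomy on `I` with projections `P` and constants `K, α`. -/
def HasUHDWith (I : Set ℝ) (h : ℝ → ℝ) (Φ : ℝ → ℝ → (E →L[ℝ] E))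
    (P : ℝ → (E →L[ℝ] E)) (K α : ℝ) : Prop :=
  (∀ t ∈ I, P t * P t = P t) ∧
  (∀ t ∈ I, ∀ s ∈ I, P t * Φ t s = Φ t s * P s) ∧
  (∀ s ∈ I, ∀ t ∈ I, s ≤ t → ‖Φ t s * P s‖ ≤ K * (h t / h s) ^ (-α)) ∧
  (∀ s ∈ I, ∀ t ∈ I, t ≤ s → ‖Φ t s * (1 - P s)‖ ≤ K * (h s / h t) ^ (-α))

/-- `Φ` has a uniform `h`-dichotomy on `I`. -/
def HasUHD (I : Set ℝ) (h : ℝ → ℝ) (Φ : ℝ → ℝ → (E →L[ℝ] E)) : Prop :=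
  ∃ K ≥ (1:ℝ), ∃ α > (0:ℝ), ∃ P : ℝ → (E →L[ℝ] E), HasUHDWith I h Φ P K α

/-- Uniform bounded `h`-growth on `I`: every solution satisfies
`|x t| ≤ C |x s|` for `s ∈ I` and `t ∈ [s, s∗T] ∩ I`. -/
def UnifBoundedHGrowth (J I : Set ℝ) (h hinv : ℝ → ℝ) (Φ : ℝ → ℝ → (E →L[ℝ] E)) : Prop :=
  ∃ T > estar hinv, ∃ C ≥ (1:ℝ), ∀ s₀ ∈ J, ∀ ξ : E, ∀ s ∈ I, ∀ t ∈ I,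
    s ≤ t → t ≤ star h hinv s T → ‖(Φ t s₀) ξ‖ ≤ C * ‖(Φ s s₀) ξ‖

/-- Uniform bounded `h`-decay on `I`: every solution satisfies
`|x t| ≤ C |x s|` for `s ∈ I` and `t ∈ [s∗T^{∗-1}, s] ∩ I`. -/
def UnifBoundedHDecay (J I : Set ℝ) (h hinv : ℝ → ℝ) (Φ : ℝ → ℝ → (E →L[ℝ] E)) : Prop :=
  ∃ T > estar hinv, ∃ C ≥ (1:ℝ), ∀ s₀ ∈ J, ∀ ξ : E, ∀ s ∈ I, ∀ t ∈ I,
    star h hinv s (sinv h hinv T) ≤ t → t ≤ s → ‖(Φ t s₀) ξ‖ ≤ C * ‖(Φ s s₀) ξ‖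

/-- Uniform bounded `h`-growth and `h`-decay on `I`: every solution satisfies
`|x t| ≤ C |x s|` for `s ∈ I` and `t ∈ [s∗T^{∗-1}, s∗T] ∩ I`. -/
def UnifBoundedHGrowthDecay (J I : Set ℝ) (h hinv : ℝ → ℝ) (Φ : ℝ → ℝ → (E →L[ℝ] E)) : Prop :=
  ∃ T > estar hinv, ∃ C ≥ (1:ℝ), ∀ s₀ ∈ J, ∀ ξ : E, ∀ s ∈ I, ∀ t ∈ I,
    star h hinv s (sinv h hinv T) ≤ t → t ≤ star h hinv s T → ‖(Φ t s₀) ξ‖ ≤ C * ‖(Φ s s₀) ξ‖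

/-- `Φ` is uniformly `h`-noncritical on `[e∗,∞)`: there are `T > e∗` and `θ ∈ (0,1)` with
`|x t| ≤ θ · sup {|x u| : u ∈ J, |u ∗ t^{∗-1}|∗ ≤ T}` for all `t ≥ T`, for every solution. -/
def UnifHNoncritical (J : Set ℝ) (h hinv : ℝ → ℝ) (Φ : ℝ → ℝ → (E →L[ℝ] E)) : Prop :=
  ∃ T > estar hinv, ∃ θ : ℝ, 0 < θ ∧ θ < 1 ∧
    ∀ s₀ ∈ J, ∀ ξ : E, ∀ t, T ≤ t →
      ‖(Φ t s₀) ξ‖ ≤ θ * sSup ((fun u => ‖(Φ u s₀) ξ‖) ''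
        {u | u ∈ J ∧ absStar h hinv (star h hinv u (sinv h hinv t)) ≤ T})

/-- `Φ` is `h`-expansive on `I`: there are `L, β > 0` such that every solution satisfies
`|x t| ≤ L (h(t∗a^{∗-1})^{-β} |x a| + h(b∗t^{∗-1})^{-β} |x b|)` for `[a,b] ⊆ I`, `a ≤ t ≤ b`. -/
def HExpansive (J I : Set ℝ) (h hinv : ℝ → ℝ) (Φ : ℝ → ℝ → (E →L[ℝ] E)) : Prop :=
  ∃ L > (0:ℝ), ∃ β > (0:ℝ), ∀ s₀ ∈ J, ∀ ξ : E, ∀ a ∈ I, ∀ b ∈ I, ∀ t, a ≤ t → t ≤ b →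
    ‖(Φ t s₀) ξ‖ ≤ L * ((h (star h hinv t (sinv h hinv a))) ^ (-β) * ‖(Φ a s₀) ξ‖ +
      (h (star h hinv b (sinv h hinv t))) ^ (-β) * ‖(Φ b s₀) ξ‖)

/-!
In logarithmic time `σ = log (h t)` the operation `∗` becomes addition, so (a) says that a
solution grows by at most the factor `C` over any window of length `L = log (h T)`, and (b)
says that it is at most `θ` times its supremum over the window of radius `L` around each
point. Let `v M` be the supremum of the solution over `[0, M]`. Since the solution is
unbounded, `v M` eventually exceeds `v (2L)`, and from then on the maximum on `[0, M]` is
not attained before time `2L`, so (b) gives `v M ≤ θ v (M + L)`; together with (a) this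
also gives `v (M + L) ≤ C x(M)`. Chaining `⌊(σ - τ) / L⌋₊ + 1` such steps from `τ` to `σ`
yields `|x(τ)| ≤ C θ^((σ - τ)/L) |x(σ)|`, which is the claim back in the original time.
-/

theorem rpow_log_div_comm {x θ : ℝ} (hx : 0 < x) (hθ : 0 < θ) (L : ℝ) :
    x ^ (Real.log θ / L) = θ ^ (Real.log x / L) := by
  rw [Real.rpow_def_of_pos hx, Real.rpow_def_of_pos hθ]
  ring_nf

def runningSup (g : ℝ → ℝ) (M : ℝ) : ℝ := sSup (g '' Icc 0 M)

section RunningSup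

variable {g : ℝ → ℝ} {L C θ : ℝ}

theorem le_runningSup {M τ : ℝ} (hbdd : BddAbove (g '' Icc 0 M)) (hτ : τ ∈ Icc 0 M) :
    g τ ≤ runningSup g M :=
  le_csSup hbdd (mem_image_of_mem g hτ)

theorem runningSup_le {M b : ℝ} (hM : 0 ≤ M) (hb : ∀ τ ∈ Icc 0 M, g τ ≤ b) :
    runningSup g M ≤ b :=
  csSup_le ((nonempty_Icc.2 hM).image g) (forall_mem_image.2 hb)

theorem runningSup_mono {M M' : ℝ} (hbdd : BddAbove (g '' Icc 0 M')) (hM : 0 ≤ M)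
    (hMM' : M ≤ M') : runningSup g M ≤ runningSup g M' :=
  csSup_le_csSup hbdd ((nonempty_Icc.2 hM).image g) (image_mono (Icc_subset_Icc le_rfl hMM'))

theorem le_pow_mul_of_growth (hL : 0 ≤ L) (hC : 0 ≤ C)
    (ha : ∀ σ τ, 0 ≤ σ → σ ≤ τ → τ ≤ σ + L → g τ ≤ C * g σ) (n : ℕ) :
    ∀ τ ∈ Icc 0 (n * L), g τ ≤ C ^ n * g 0 := by
  induction n with
  | zero =>
    rintro τ ⟨h₀, h₁⟩
    obtain rfl : τ = 0 := le_antisymm (by simpa using h₁) h₀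
    simp
  | succ n ih =>
    rintro τ ⟨h₀, h₁⟩
    push_cast at h₁
    have hσ : max 0 (τ - L) ∈ Icc 0 (n * L) :=
      ⟨le_max_left _ _, max_le (by positivity) (by linarith)⟩
    calc g τ ≤ C * g (max 0 (τ - L)) :=
          ha _ τ hσ.1 (max_le h₀ (by linarith)) (by linarith [le_max_right 0 (τ - L)])
      _ ≤ C * (C ^ n * g 0) := mul_le_mul_of_nonneg_left (ih _ hσ) hC
      _ = C ^ (n + 1) * g 0 := by ring

theorem bddAbove_image_Icc_of_growth (hL : 0 < L) (hC : 0 ≤ C)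
    (ha : ∀ σ τ, 0 ≤ σ → σ ≤ τ → τ ≤ σ + L → g τ ≤ C * g σ) (M : ℝ) :
    BddAbove (g '' Icc 0 M) := by
  obtain ⟨n, hn⟩ := exists_nat_ge (M / L)
  refine ⟨C ^ n * g 0, forall_mem_image.2 fun τ hτ => ?_⟩
  exact le_pow_mul_of_growth hL.le hC ha n τ ⟨hτ.1, hτ.2.trans ((div_le_iff₀ hL).1 hn)⟩

section Noncritical

variable (hbdd : ∀ M, BddAbove (g '' Icc 0 M)) (hL : 0 ≤ L) (hθ : 0 ≤ θ)
  (hb : ∀ τ, L ≤ τ → g τ ≤ θ * sSup (g '' Icc (τ - L) (τ + L)))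
include hbdd hL hθ hb

theorem runningSup_le_mul_runningSup_add {M : ℝ} (hM : 0 ≤ M)
    (hlarge : runningSup g (2 * L) < runningSup g M) :
    runningSup g M ≤ θ * runningSup g (M + L) := by
  have hmax : runningSup g M ≤ max (runningSup g (2 * L)) (θ * runningSup g (M + L)) := by
    refine runningSup_le hM fun τ hτ => ?_
    rcases le_or_gt τ (2 * L) with hτL | hτL
    · exact le_max_of_le_left (le_runningSup (hbdd _) ⟨hτ.1, hτL⟩)
    · refine le_max_of_le_right ((hb τ (by linarith)).trans (mul_le_mul_of_nonneg_left ?_ hθ))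
      exact csSup_le_csSup (hbdd _) ((nonempty_Icc.2 (by linarith)).image g)
        (image_mono (Icc_subset_Icc (by linarith) (by linarith [hτ.2])))
  exact (le_max_iff.1 hmax).resolve_left hlarge.not_ge

theorem runningSup_le_pow_mul_runningSup_add {M : ℝ} (hM : 0 ≤ M)
    (hlarge : runningSup g (2 * L) < runningSup g M) (n : ℕ) :
    runningSup g M ≤ θ ^ n * runningSup g (M + n * L) := by
  induction n with
  | zero => simp
  | succ n ih =>
    have hMn : 0 ≤ M + n * L := by positivity
    have hlarge' : runningSup g (2 * L) < runningSup g (M + n * L) :=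
      hlarge.trans_le (runningSup_mono (hbdd _) hM (by linarith [mul_nonneg n.cast_nonneg hL]))
    calc runningSup g M ≤ θ ^ n * runningSup g (M + n * L) := ih
      _ ≤ θ ^ n * (θ * runningSup g (M + n * L + L)) :=
          mul_le_mul_of_nonneg_left
            (runningSup_le_mul_runningSup_add hbdd hL hθ hb hMn hlarge') (by positivity)
      _ = θ ^ (n + 1) * runningSup g (M + (n + 1 : ℕ) * L) := by
          rw [Nat.cast_succ, add_one_mul, ← add_assoc]
          ring

/-- Over `[M, M + L]` the solution is controlled by (a), while on `[0, M]` it is below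
`θ * runningSup g (M + L)`; as `θ < 1`, the latter cannot be where the supremum is. -/
theorem runningSup_add_le_mul (hg0 : ∀ τ, 0 ≤ g τ) (hC : 0 ≤ C) (hθ1 : θ < 1)
    (ha : ∀ σ τ, 0 ≤ σ → σ ≤ τ → τ ≤ σ + L → g τ ≤ C * g σ) {M : ℝ} (hM : 0 ≤ M)
    (hlarge : runningSup g (2 * L) < runningSup g M) :
    runningSup g (M + L) ≤ C * g M := by
  have hstep := runningSup_le_mul_runningSup_add hbdd hL hθ hb hM hlarge
  have hmax : runningSup g (M + L) ≤ max (θ * runningSup g (M + L)) (C * g M) := by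
    refine runningSup_le (by linarith) fun τ hτ => ?_
    rcases le_or_gt τ M with hτM | hMτ
    · exact le_max_of_le_left ((le_runningSup (hbdd M) ⟨hτ.1, hτM⟩).trans hstep)
    · exact le_max_of_le_right (ha M τ hM hMτ.le hτ.2)
  rcases le_max_iff.1 hmax with hle | hle
  · have hnonpos : runningSup g (M + L) ≤ 0 := by nlinarith
    exact hnonpos.trans (mul_nonneg hC (hg0 M))
  · exact hle

end Noncritical

theorem exists_forall_le_mul_rpow_mul_of_not_bddAbove (hg0 : ∀ τ, 0 ≤ g τ) (hL : 0 < L)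
    (hC : 0 ≤ C) (hθ0 : 0 < θ) (hθ1 : θ < 1)
    (ha : ∀ σ τ, 0 ≤ σ → σ ≤ τ → τ ≤ σ + L → g τ ≤ C * g σ)
    (hb : ∀ τ, L ≤ τ → g τ ≤ θ * sSup (g '' Icc (τ - L) (τ + L)))
    (hunb : ¬ BddAbove (g '' Ici 0)) :
    ∃ τ₁ > 0, ∀ τ σ, τ₁ ≤ τ → τ ≤ σ → g τ ≤ C * θ ^ ((σ - τ) / L) * g σ := by
  have hbdd := bddAbove_image_Icc_of_growth hL hC ha
  obtain ⟨τ₀, hτ₀, hgτ₀⟩ : ∃ τ₀ ≥ 0, runningSup g (2 * L) < g τ₀ := by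
    by_contra! hle
    exact hunb ⟨_, forall_mem_image.2 hle⟩
  refine ⟨max τ₀ (2 * L), lt_max_of_lt_right (by linarith), fun τ σ hτ hτσ => ?_⟩
  have hτ0 : 0 ≤ τ := hτ₀.trans ((le_max_left _ _).trans hτ)
  have hlarge : ∀ M, τ ≤ M → runningSup g (2 * L) < runningSup g M := fun M hM =>
    hgτ₀.trans_le (le_runningSup (hbdd M) ⟨hτ₀, (le_max_left _ _).trans (hτ.trans hM)⟩)
  set n := ⌊(σ - τ) / L⌋₊
  have hn : n * L ≤ σ - τ := (le_div_iff₀ hL).1 (Nat.floor_le (div_nonneg (by linarith) hL.le))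
  have hθn : θ ^ (n + 1) ≤ θ ^ ((σ - τ) / L) := by
    rw [← Real.rpow_natCast, Nat.cast_succ]
    exact Real.rpow_le_rpow_of_exponent_ge hθ0 hθ1.le (Nat.lt_floor_add_one _).le
  have hσ0 : 0 ≤ σ := hτ0.trans hτσ
  calc g τ ≤ runningSup g τ := le_runningSup (hbdd τ) ⟨hτ0, le_rfl⟩
    _ ≤ θ ^ n * runningSup g (τ + n * L) :=
        runningSup_le_pow_mul_runningSup_add hbdd hL.le hθ0.le hb hτ0 (hlarge τ le_rfl) n
    _ ≤ θ ^ n * runningSup g σ :=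
        mul_le_mul_of_nonneg_left (runningSup_mono (hbdd σ) (by positivity) (by linarith))
          (by positivity)
    _ ≤ θ ^ n * (θ * (C * g σ)) := by
        refine mul_le_mul_of_nonneg_left ?_ (by positivity)
        calc runningSup g σ ≤ θ * runningSup g (σ + L) :=
              runningSup_le_mul_runningSup_add hbdd hL.le hθ0.le hb hσ0 (hlarge σ hτσ)
          _ ≤ θ * (C * g σ) := mul_le_mul_of_nonneg_left
              (runningSup_add_le_mul hbdd hL.le hθ0.le hb hg0 hC hθ1 ha hσ0 (hlarge σ hτσ))
              hθ0.le
    _ = θ ^ (n + 1) * (C * g σ) := by ring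
    _ ≤ θ ^ ((σ - τ) / L) * (C * g σ) := mul_le_mul_of_nonneg_right hθn (mul_nonneg hC (hg0 σ))
    _ = C * θ ^ ((σ - τ) / L) * g σ := by ring

end RunningSup

namespace GrowthRate

variable {J : Set ℝ} {h hinv : ℝ → ℝ} (hgr : GrowthRate J h hinv)
include hgr

theorem mem_of_le {a b : ℝ} (ha : a ∈ J) (hab : a ≤ b) : b ∈ J := by
  rcases hgr.J_eq with ⟨a₀, rfl⟩ | rfl
  · exact lt_of_lt_of_le ha hab
  · trivial

theorem hinv_exp_mem (σ : ℝ) : hinv (Real.exp σ) ∈ J :=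
  hgr.inv_mem _ (Real.exp_pos σ)

theorem estar_mem : estar hinv ∈ J :=
  hgr.inv_mem 1 (mem_Ioi.2 one_pos)

theorem star_mem {a b : ℝ} (ha : a ∈ J) (hb : b ∈ J) : star h hinv a b ∈ J :=
  hgr.inv_mem _ (mul_pos (hgr.pos a ha) (hgr.pos b hb))

theorem sinv_mem {t : ℝ} (ht : t ∈ J) : sinv h hinv t ∈ J :=
  hgr.inv_mem _ (one_div_pos.2 (hgr.pos t ht))

theorem log_h_hinv_exp (σ : ℝ) : Real.log (h (hinv (Real.exp σ))) = σ := by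
  rw [hgr.inv_right _ (Real.exp_pos σ), Real.log_exp]

theorem hinv_exp_log_h {t : ℝ} (ht : t ∈ J) : hinv (Real.exp (Real.log (h t))) = t := by
  rw [Real.exp_log (hgr.pos t ht), hgr.inv_left t ht]

theorem strictMonoOn_log_h : StrictMonoOn (fun t => Real.log (h t)) J :=
  fun a ha _ hb hab => Real.log_lt_log (hgr.pos a ha) (hgr.mono ha hb hab)

theorem log_h_le_log_h_iff {a b : ℝ} (ha : a ∈ J) (hb : b ∈ J) :
    Real.log (h a) ≤ Real.log (h b) ↔ a ≤ b :=
  hgr.strictMonoOn_log_h.le_iff_le ha hb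

theorem log_h_lt_log_h_iff {a b : ℝ} (ha : a ∈ J) (hb : b ∈ J) :
    Real.log (h a) < Real.log (h b) ↔ a < b :=
  hgr.strictMonoOn_log_h.lt_iff_lt ha hb

theorem log_h_estar : Real.log (h (estar hinv)) = 0 := by
  rw [estar, hgr.inv_right 1 (mem_Ioi.2 one_pos), Real.log_one]

theorem log_h_star {a b : ℝ} (ha : a ∈ J) (hb : b ∈ J) :
    Real.log (h (star h hinv a b)) = Real.log (h a) + Real.log (h b) := by
  have ha' := hgr.pos a ha
  have hb' := hgr.pos b hb
  show Real.log (h (hinv (h a * h b))) = _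
  rw [hgr.inv_right _ (mul_pos ha' hb'), Real.log_mul ha'.ne' hb'.ne']

theorem log_h_sinv {t : ℝ} (ht : t ∈ J) :
    Real.log (h (sinv h hinv t)) = -Real.log (h t) := by
  rw [sinv, hgr.inv_right _ (one_div_pos.2 (hgr.pos t ht)), one_div, Real.log_inv]

theorem absStar_le_iff {w T : ℝ} (hw : w ∈ J) (hT : T ∈ J) :
    absStar h hinv w ≤ T ↔ |Real.log (h w)| ≤ Real.log (h T) := by
  unfold absStar
  split_ifs with hew
  · have hnonneg : 0 ≤ Real.log (h w) := by
      rwa [← hgr.log_h_estar, hgr.log_h_le_log_h_iff hgr.estar_mem hw]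
    rw [← hgr.log_h_le_log_h_iff hw hT, abs_of_nonneg hnonneg]
  · have hneg : Real.log (h w) < 0 := by
      rwa [← hgr.log_h_estar, hgr.log_h_lt_log_h_iff hw hgr.estar_mem, ← not_le]
    rw [← hgr.log_h_le_log_h_iff (hgr.sinv_mem hw) hT, hgr.log_h_sinv hw, abs_of_neg hneg]

theorem setOf_absStar_le_eq_image {t T : ℝ} (ht : t ∈ J) (hT : T ∈ J) :
    {u | u ∈ J ∧ absStar h hinv (star h hinv u (sinv h hinv t)) ≤ T} =
      (hinv ∘ Real.exp) '' Icc (Real.log (h t) - Real.log (h T))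
        (Real.log (h t) + Real.log (h T)) := by
  have hwindow : ∀ u ∈ J, absStar h hinv (star h hinv u (sinv h hinv t)) ≤ T ↔
      Real.log (h u) ∈ Icc (Real.log (h t) - Real.log (h T))
        (Real.log (h t) + Real.log (h T)) := fun u hu => by
    rw [hgr.absStar_le_iff (hgr.star_mem hu (hgr.sinv_mem ht)) hT,
      hgr.log_h_star hu (hgr.sinv_mem ht), hgr.log_h_sinv ht, ← sub_eq_add_neg, abs_sub_le_iff,
      mem_Icc]
    constructor <;> rintro ⟨h₁, h₂⟩ <;> constructor <;> linarith
  ext u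
  constructor
  · rintro ⟨hu, hle⟩
    exact ⟨Real.log (h u), (hwindow u hu).1 hle, hgr.hinv_exp_log_h hu⟩
  · rintro ⟨σ, hσ, rfl⟩
    refine ⟨hgr.hinv_exp_mem σ, (hwindow _ (hgr.hinv_exp_mem σ)).2 ?_⟩
    rwa [hgr.log_h_hinv_exp]

variable {Y : ℝ → ℝ} {C T θ : ℝ}

theorem growth_comp_hinv_exp (hT : T ∈ J)
    (ha : ∀ s t : ℝ, estar hinv ≤ s → s ≤ t → t ≤ star h hinv s T → Y t ≤ C * Y s) :
    ∀ σ τ, 0 ≤ σ → σ ≤ τ → τ ≤ σ + Real.log (h T) →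
      (Y ∘ hinv ∘ Real.exp) τ ≤ C * (Y ∘ hinv ∘ Real.exp) σ := by
  intro σ τ hσ hστ hτ
  have hσJ := hgr.hinv_exp_mem σ
  have hτJ := hgr.hinv_exp_mem τ
  refine ha (hinv (Real.exp σ)) (hinv (Real.exp τ)) ?_ ?_ ?_
  · rwa [← hgr.log_h_le_log_h_iff hgr.estar_mem hσJ, hgr.log_h_estar, hgr.log_h_hinv_exp]
  · rwa [← hgr.log_h_le_log_h_iff hσJ hτJ, hgr.log_h_hinv_exp, hgr.log_h_hinv_exp]
  · rwa [← hgr.log_h_le_log_h_iff hτJ (hgr.star_mem hσJ hT), hgr.log_h_star hσJ hT,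
      hgr.log_h_hinv_exp, hgr.log_h_hinv_exp]

theorem noncritical_comp_hinv_exp (hT : T ∈ J)
    (hb : ∀ t : ℝ, T ≤ t → Y t ≤ θ * sSup (Y ''
      {u | u ∈ J ∧ absStar h hinv (star h hinv u (sinv h hinv t)) ≤ T})) :
    ∀ τ, Real.log (h T) ≤ τ → (Y ∘ hinv ∘ Real.exp) τ ≤
      θ * sSup ((Y ∘ hinv ∘ Real.exp) '' Icc (τ - Real.log (h T)) (τ + Real.log (h T))) := by
  intro τ hτ
  have htJ := hgr.hinv_exp_mem τ
  have hTt : T ≤ hinv (Real.exp τ) := by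
    rwa [← hgr.log_h_le_log_h_iff hT htJ, hgr.log_h_hinv_exp]
  have hbτ := hb _ hTt
  rw [hgr.setOf_absStar_le_eq_image htJ hT, hgr.log_h_hinv_exp, ← image_comp] at hbτ
  exact hbτ

theorem exists_bound_of_bddAbove_comp_hinv_exp
    (hbdd : BddAbove ((Y ∘ hinv ∘ Real.exp) '' Ici 0)) :
    ∃ B : ℝ, ∀ t ∈ Ici (estar hinv), Y t ≤ B := by
  obtain ⟨B, hB⟩ := hbdd
  refine ⟨B, fun t ht => ?_⟩
  have htJ := hgr.mem_of_le hgr.estar_mem ht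
  have hσ : 0 ≤ Real.log (h t) := by
    rwa [← hgr.log_h_estar, hgr.log_h_le_log_h_iff hgr.estar_mem htJ]
  simpa only [Function.comp_apply, hgr.hinv_exp_log_h htJ] using
    hB (mem_image_of_mem _ (mem_Ici.2 hσ))

theorem exists_forall_le_of_comp_hinv_exp {L : ℝ} (hθ : 0 < θ)
    (hbound : ∃ τ₁ > 0, ∀ τ σ, τ₁ ≤ τ → τ ≤ σ →
      (Y ∘ hinv ∘ Real.exp) τ ≤ C * θ ^ ((σ - τ) / L) * (Y ∘ hinv ∘ Real.exp) σ) :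
    ∃ T₁ > estar hinv, ∀ t s : ℝ, T₁ ≤ t → t ≤ s →
      Y t ≤ C * (h s / h t) ^ (Real.log θ / L) * Y s := by
  obtain ⟨τ₁, hτ₁, hbound⟩ := hbound
  have hT₁J := hgr.hinv_exp_mem τ₁
  refine ⟨hinv (Real.exp τ₁), ?_, fun t s ht hts => ?_⟩
  · rwa [gt_iff_lt, ← hgr.log_h_lt_log_h_iff hgr.estar_mem hT₁J, hgr.log_h_estar,
      hgr.log_h_hinv_exp]
  have htJ := hgr.mem_of_le hT₁J ht
  have hsJ := hgr.mem_of_le htJ hts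
  have hτ₁t : τ₁ ≤ Real.log (h t) := by
    rwa [← hgr.log_h_le_log_h_iff hT₁J htJ, hgr.log_h_hinv_exp] at ht
  have hYt := hbound _ _ hτ₁t ((hgr.log_h_le_log_h_iff htJ hsJ).2 hts)
  simp only [Function.comp_apply, hgr.hinv_exp_log_h htJ, hgr.hinv_exp_log_h hsJ] at hYt
  rwa [rpow_log_div_comm (div_pos (hgr.pos s hsJ) (hgr.pos t htJ)) hθ,
    Real.log_div (hgr.pos s hsJ).ne' (hgr.pos t htJ).ne']

end GrowthRate

theorem statement13_general {J : Set ℝ} {h hinv : ℝ → ℝ} (hgr : GrowthRate J h hinv)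
    {E : Type*} [NormedAddCommGroup E] [NormedSpace ℝ E]
    (Φ : ℝ → ℝ → (E →L[ℝ] E))
    (T C θ : ℝ) (hT : estar hinv < T) (hC : 1 < C) (hθ0 : 0 < θ) (hθ1 : θ < 1)
    (ha : ∀ s₀ ∈ J, ∀ ξ : E, ∀ s t : ℝ, estar hinv ≤ s → s ≤ t → t ≤ star h hinv s T →
      ‖(Φ t s₀) ξ‖ ≤ C * ‖(Φ s s₀) ξ‖)
    (hb : ∀ s₀ ∈ J, ∀ ξ : E, ∀ t : ℝ, T ≤ t →
      ‖(Φ t s₀) ξ‖ ≤ θ * sSup ((fun u => ‖(Φ u s₀) ξ‖) ''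
        {u | u ∈ J ∧ absStar h hinv (star h hinv u (sinv h hinv t)) ≤ T}))
    (K α : ℝ) (hKdef : K = θ⁻¹ * C) (hαdef : α = -Real.log θ / Real.log (h T)) :
    ∀ s₀ ∈ J, ∀ ξ : E,
      ¬ (∃ B : ℝ, ∀ t ∈ Set.Ici (estar hinv), ‖(Φ t s₀) ξ‖ ≤ B) →
      ∃ T₁ > estar hinv, ∀ t s : ℝ, T₁ ≤ t → t ≤ s →
        ‖(Φ t s₀) ξ‖ ≤ K * (h s / h t) ^ (-α) * ‖(Φ s s₀) ξ‖ := by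
  intro s₀ hs₀ ξ hunb
  have hTJ : T ∈ J := hgr.mem_of_le hgr.estar_mem hT.le
  have hL : 0 < Real.log (h T) := by
    rwa [← hgr.log_h_estar, hgr.log_h_lt_log_h_iff hgr.estar_mem hTJ]
  obtain ⟨T₁, hT₁, hbound⟩ := hgr.exists_forall_le_of_comp_hinv_exp hθ0
    (exists_forall_le_mul_rpow_mul_of_not_bddAbove
      (g := (fun u => ‖(Φ u s₀) ξ‖) ∘ hinv ∘ Real.exp) (fun _ => norm_nonneg _) hL
      (by linarith) hθ0 hθ1 (hgr.growth_comp_hinv_exp hTJ (ha s₀ hs₀ ξ))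
      (hgr.noncritical_comp_hinv_exp hTJ (hb s₀ hs₀ ξ))
      (fun hbdd => hunb (hgr.exists_bound_of_bddAbove_comp_hinv_exp hbdd)))
  refine ⟨T₁, hT₁, fun t s ht hts => (hbound t s ht hts).trans ?_⟩
  have htJ := hgr.mem_of_le (hgr.mem_of_le hgr.estar_mem hT₁.le) ht
  have hratio : 0 < h s / h t := div_pos (hgr.pos s (hgr.mem_of_le htJ hts)) (hgr.pos t htJ)
  rw [hKdef, hαdef, neg_div, neg_neg, mul_assoc θ⁻¹, mul_assoc θ⁻¹]
  exact le_mul_of_one_le_left (by positivity) ((one_le_inv₀ hθ0).2 hθ1.le)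

/-- under hypotheses (a) and (b) (as in Statement 11), with
`K = θ⁻¹ C_T` and `α = -ln θ / ln (h T)`, for every solution unbounded on `[e∗,∞)`
there exists `T₁ > e∗` with `|x t| ≤ K (h s / h t)^{-α} |x s|` for all `s ≥ t ≥ T₁`. -/
theorem statement13 {J : Set ℝ} {h hinv : ℝ → ℝ} (hgr : GrowthRate J h hinv)
    {E : Type*} [NormedAddCommGroup E] [NormedSpace ℝ E] [FiniteDimensional ℝ E]
    (Φ : ℝ → ℝ → (E →L[ℝ] E)) (hΦ : IsEvolutionFamily J Φ)
    (T C θ : ℝ) (hT : estar hinv < T) (hC : 1 < C) (hθ0 : 0 < θ) (hθ1 : θ < 1)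
    (ha : ∀ s₀ ∈ J, ∀ ξ : E, ∀ s t : ℝ, estar hinv ≤ s → s ≤ t → t ≤ star h hinv s T →
      ‖(Φ t s₀) ξ‖ ≤ C * ‖(Φ s s₀) ξ‖)
    (hb : ∀ s₀ ∈ J, ∀ ξ : E, ∀ t : ℝ, T ≤ t →
      ‖(Φ t s₀) ξ‖ ≤ θ * sSup ((fun u => ‖(Φ u s₀) ξ‖) ''
        {u | u ∈ J ∧ absStar h hinv (star h hinv u (sinv h hinv t)) ≤ T}))
    (K α : ℝ) (hKdef : K = θ⁻¹ * C) (hαdef : α = -Real.log θ / Real.log (h T)) :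
    ∀ s₀ ∈ J, ∀ ξ : E,
      ¬ (∃ B : ℝ, ∀ t ∈ Set.Ici (estar hinv), ‖(Φ t s₀) ξ‖ ≤ B) →
      ∃ T₁ > estar hinv, ∀ t s : ℝ, T₁ ≤ t → t ≤ s →
        ‖(Φ t s₀) ξ‖ ≤ K * (h s / h t) ^ (-α) * ‖(Φ s s₀) ξ‖ :=
  statement13_general hgr Φ T C θ hT hC hθ0 hθ1 ha hb K α hKdef hαdef
end
end

section
/- If the evolution family Φ is h-expansive on [e∗, +∞), then Φ is uniformly h-noncritical on [e∗, +∞): there exist T > e∗ and θ ∈ (0,1) such that every solution satisfies |x(t)| ≤ θ·sup{|x(u)| : u ∈ J, |u∗t^{∗-1}|∗ ≤ T} for all t ≥ T (one may take any T with 2L·h(T)^{-β} < 1 and θ = 2L·h(T)^{-β}). -/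
open Set

noncomputable section

variable {E : Type*} [NormedAddCommGroup E] [NormedSpace ℝ E]

/-!
Take `T = h⁻¹(y)` with `y^{-β} = 1/(2L+1)`. For `t ≥ T` the window `|u ∗ t^{∗-1}|∗ ≤ T` is the
interval `[a, b] = [t ∗ T^{∗-1}, t ∗ T]`, which lies in `[e∗, ∞)`. Expansiveness on `[a, b]` gives
`|x t| ≤ L y^{-β} (|x a| + |x b|)`, and at any `u ∈ [a, b]` it gives `|x u| ≤ L (|x a| + |x b|)`,
so the supremum over the window is finite and dominates `|x a|` and `|x b|`. Hence
`|x t| ≤ 2L/(2L+1) · sup`.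
-/

namespace GrowthRate

variable {J : Set ℝ} {h hinv : ℝ → ℝ}

theorem mem_of_le_s15 (hgr : GrowthRate J h hinv) {s t : ℝ} (hs : s ∈ J) (hst : s ≤ t) : t ∈ J := by
  rcases hgr.J_eq with ⟨a₀, rfl⟩ | rfl
  · exact lt_of_lt_of_le hs hst
  · trivial

theorem Ici_estar_subset (hgr : GrowthRate J h hinv) : Ici (estar hinv) ⊆ J :=
  fun _ hu => hgr.mem_of_le_s15 (hgr.inv_mem 1 (mem_Ioi.2 one_pos)) hu

theorem hinv_le_iff (hgr : GrowthRate J h hinv) {y u : ℝ} (hy : 0 < y) (hu : u ∈ J) :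
    hinv y ≤ u ↔ y ≤ h u := by
  rw [← hgr.mono.le_iff_le (hgr.inv_mem y hy) hu, hgr.inv_right y hy]

theorem le_hinv_iff (hgr : GrowthRate J h hinv) {y u : ℝ} (hy : 0 < y) (hu : u ∈ J) :
    u ≤ hinv y ↔ h u ≤ y := by
  rw [← hgr.mono.le_iff_le hu (hgr.inv_mem y hy), hgr.inv_right y hy]

theorem hinv_le_hinv_iff (hgr : GrowthRate J h hinv) {x y : ℝ} (hx : 0 < x) (hy : 0 < y) :
    hinv x ≤ hinv y ↔ x ≤ y := by
  rw [hgr.hinv_le_iff hx (hgr.inv_mem y hy), hgr.inv_right y hy]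

theorem hinv_lt_hinv_iff (hgr : GrowthRate J h hinv) {x y : ℝ} (hx : 0 < x) (hy : 0 < y) :
    hinv x < hinv y ↔ x < y := by
  simp only [lt_iff_not_ge, hgr.hinv_le_hinv_iff hy hx]

theorem star_sinv (hgr : GrowthRate J h hinv) (u : ℝ) {w : ℝ} (hw : w ∈ J) :
    star h hinv u (sinv h hinv w) = hinv (h u / h w) := by
  unfold _root_.star sinv
  rw [hgr.inv_right _ (one_div_pos.2 (hgr.pos w hw)), mul_one_div]

theorem h_star_sinv (hgr : GrowthRate J h hinv) {u w : ℝ} (hu : u ∈ J) (hw : w ∈ J) :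
    h (star h hinv u (sinv h hinv w)) = h u / h w := by
  rw [hgr.star_sinv u hw, hgr.inv_right _ (div_pos (hgr.pos u hu) (hgr.pos w hw))]

theorem absStar_hinv (hgr : GrowthRate J h hinv) {y : ℝ} (hy : 0 < y) :
    absStar h hinv (hinv y) = hinv (max y y⁻¹) := by
  rw [absStar, estar]
  split_ifs with hy1 <;> rw [hgr.hinv_le_hinv_iff one_pos hy] at hy1
  · rw [max_eq_left ((inv_le_one_of_one_le₀ hy1).trans hy1)]
  · rw [not_le] at hy1
    rw [sinv, hgr.inv_right y hy, one_div, max_eq_right (hy1.trans (one_lt_inv₀ hy |>.2 hy1)).le]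

theorem setOf_absStar_star_sinv_le_eq_Icc (hgr : GrowthRate J h hinv) {t y : ℝ} (ht : t ∈ J)
    (hy : 0 < y) :
    {u | u ∈ J ∧ absStar h hinv (star h hinv u (sinv h hinv t)) ≤ hinv y} =
      Icc (hinv (h t / y)) (hinv (h t * y)) := by
  have hht := hgr.pos t ht
  have hwindow : ∀ u ∈ J, absStar h hinv (star h hinv u (sinv h hinv t)) ≤ hinv y ↔
      hinv (h t / y) ≤ u ∧ u ≤ hinv (h t * y) := by
    intro u hu
    have hhu := hgr.pos u hu
    rw [hgr.star_sinv u ht, hgr.absStar_hinv (div_pos hhu hht),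
      hgr.hinv_le_hinv_iff (lt_max_of_lt_left (div_pos hhu hht)) hy, max_le_iff, inv_div,
      hgr.hinv_le_iff (div_pos hht hy) hu, hgr.le_hinv_iff (mul_pos hht hy) hu,
      div_le_iff₀ hht, div_le_iff₀ hhu, div_le_iff₀ hy, mul_comm y (h t), mul_comm y (h u)]
    exact and_comm
  ext u
  refine ⟨fun ⟨hu, hwin⟩ => (hwindow u hu).1 hwin, fun hab => ?_⟩
  have hu : u ∈ J := hgr.mem_of_le_s15 (hgr.inv_mem _ (div_pos hht hy)) hab.1
  exact ⟨hu, (hwindow u hu).2 hab⟩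

theorem rpow_neg_h_star_sinv_le_one (hgr : GrowthRate J h hinv) {β u v : ℝ} (hβ : 0 ≤ β)
    (hu : u ∈ J) (hv : v ∈ J) (huv : u ≤ v) : h (star h hinv v (sinv h hinv u)) ^ (-β) ≤ 1 := by
  rw [hgr.h_star_sinv hv hu]
  exact Real.rpow_le_one_of_one_le_of_nonpos
    ((one_le_div (hgr.pos u hu)).2 (hgr.mono.monotoneOn hu hv huv)) (neg_nonpos.2 hβ)

end GrowthRate

theorem exists_one_lt_rpow_neg_eq {β c : ℝ} (hβ : 0 < β) (hc : 0 < c) (hc1 : c < 1) :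
    ∃ y > 1, y ^ (-β) = c := by
  refine ⟨c ^ (-β⁻¹), Real.one_lt_rpow_of_pos_of_lt_one_of_neg hc hc1 (by simpa using hβ), ?_⟩
  rw [← Real.rpow_mul hc.le, neg_mul_neg, inv_mul_cancel₀ hβ.ne', Real.rpow_one]

/-- The `h`-expansiveness estimate on `I` for a single function `f`, the norm of a solution. -/
def HExpansiveEstimate (I : Set ℝ) (h hinv : ℝ → ℝ) (L β : ℝ) (f : ℝ → ℝ) : Prop :=
  ∀ a ∈ I, ∀ b ∈ I, ∀ t, a ≤ t → t ≤ b →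
    f t ≤ L * ((h (star h hinv t (sinv h hinv a))) ^ (-β) * f a +
      (h (star h hinv b (sinv h hinv t))) ^ (-β) * f b)

namespace HExpansiveEstimate

variable {J I : Set ℝ} {h hinv : ℝ → ℝ} {L β : ℝ} {f : ℝ → ℝ}

theorem le_mul_add (hf : HExpansiveEstimate I h hinv L β f) (hgr : GrowthRate J h hinv)
    (hIJ : I ⊆ J) (hL : 0 ≤ L) (hβ : 0 ≤ β) (hf0 : ∀ u, 0 ≤ f u) {a b u : ℝ} (ha : a ∈ I)
    (hb : b ∈ I) (hau : a ≤ u) (hub : u ≤ b) : f u ≤ L * (f a + f b) := by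
  have hu : u ∈ J := hgr.mem_of_le_s15 (hIJ ha) hau
  have hwa := hgr.rpow_neg_h_star_sinv_le_one hβ (hIJ ha) hu hau
  have hwb := hgr.rpow_neg_h_star_sinv_le_one hβ hu (hIJ hb) hub
  have hfa := hf0 a
  have hfb := hf0 b
  calc f u ≤ L * ((h (star h hinv u (sinv h hinv a))) ^ (-β) * f a +
        (h (star h hinv b (sinv h hinv u))) ^ (-β) * f b) := hf a ha b hb u hau hub
    _ ≤ L * (1 * f a + 1 * f b) := by gcongr
    _ = L * (f a + f b) := by ring

theorem le_mul_sSup_window (hf : HExpansiveEstimate (Ici (estar hinv)) h hinv L β f)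
    (hgr : GrowthRate J h hinv) (hL : 0 ≤ L) (hβ : 0 ≤ β) (hf0 : ∀ u, 0 ≤ f u) {y t : ℝ}
    (hy : 1 ≤ y) (hyt : hinv y ≤ t) :
    f t ≤ 2 * L * y ^ (-β) *
      sSup (f '' {u | u ∈ J ∧ absStar h hinv (star h hinv u (sinv h hinv t)) ≤ hinv y}) := by
  have hy0 : 0 < y := zero_lt_one.trans_le hy
  have ht : t ∈ J := hgr.mem_of_le_s15 (hgr.inv_mem y hy0) hyt
  have hht := hgr.pos t ht
  have hIJ := hgr.Ici_estar_subset
  rw [hgr.setOf_absStar_star_sinv_le_eq_Icc ht hy0]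
  set a := hinv (h t / y)
  set b := hinv (h t * y)
  have hha : h a = h t / y := hgr.inv_right _ (div_pos hht hy0)
  have hhb : h b = h t * y := hgr.inv_right _ (mul_pos hht hy0)
  have hea : estar hinv ≤ a := by
    rw [estar, hgr.hinv_le_hinv_iff one_pos (div_pos hht hy0), one_le_div hy0]
    exact (hgr.hinv_le_iff hy0 ht).1 hyt
  have hat : a ≤ t := (hgr.hinv_le_iff (div_pos hht hy0) ht).2 (div_le_self hht.le hy)
  have htb : t ≤ b := (hgr.le_hinv_iff (mul_pos hht hy0) ht).2 (le_mul_of_one_le_right hht.le hy)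
  have heb : estar hinv ≤ b := hea.trans (hat.trans htb)
  have hbdd : BddAbove (f '' Icc a b) :=
    ⟨L * (f a + f b), forall_mem_image.2 fun _ hu =>
      hf.le_mul_add hgr hIJ hL hβ hf0 hea heb hu.1 hu.2⟩
  have hfa := le_csSup hbdd (mem_image_of_mem f (left_mem_Icc.2 (hat.trans htb)))
  have hfb := le_csSup hbdd (mem_image_of_mem f (right_mem_Icc.2 (hat.trans htb)))
  have hwa : h (star h hinv t (sinv h hinv a)) = y := by
    rw [hgr.h_star_sinv ht (hIJ hea), hha, div_div_cancel₀ hht.ne']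
  have hwb : h (star h hinv b (sinv h hinv t)) = y := by
    rw [hgr.h_star_sinv (hIJ heb) ht, hhb, mul_div_cancel_left₀ y hht.ne']
  have hyβ : 0 ≤ y ^ (-β) := Real.rpow_nonneg hy0.le _
  calc f t ≤ L * (y ^ (-β) * f a + y ^ (-β) * f b) := by
        simpa only [hwa, hwb] using hf a hea b heb t hat htb
    _ ≤ L * (y ^ (-β) * sSup (f '' Icc a b) + y ^ (-β) * sSup (f '' Icc a b)) := by gcongr
    _ = 2 * L * y ^ (-β) * sSup (f '' Icc a b) := by ring

end HExpansiveEstimate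

theorem statement15_general {J : Set ℝ} {h hinv : ℝ → ℝ} (hgr : GrowthRate J h hinv)
    {E : Type*} [NormedAddCommGroup E] [NormedSpace ℝ E]
    (Φ : ℝ → ℝ → (E →L[ℝ] E))
    (hexp : HExpansive J (Set.Ici (estar hinv)) h hinv Φ) :
    UnifHNoncritical J h hinv Φ := by
  obtain ⟨L, hL, β, hβ, hexp⟩ := hexp
  obtain ⟨y, hy, hyβ⟩ : ∃ y > 1, y ^ (-β) = (2 * L + 1)⁻¹ :=
    exists_one_lt_rpow_neg_eq hβ (by positivity) (inv_lt_one_of_one_lt₀ (by linarith))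
  refine ⟨hinv y, (hgr.hinv_lt_hinv_iff one_pos (by linarith)).2 hy, 2 * L / (2 * L + 1),
    by positivity, (div_lt_one (by positivity)).2 (by linarith), ?_⟩
  intro s₀ hs₀ ξ t ht
  have hsol : HExpansiveEstimate (Ici (estar hinv)) h hinv L β (fun u => ‖Φ u s₀ ξ‖) :=
    hexp s₀ hs₀ ξ
  simpa only [hyβ, ← div_eq_mul_inv] using
    hsol.le_mul_sSup_window hgr hL.le hβ.le (fun _ => norm_nonneg _) hy.le ht

/-- `h`-expansiveness on `[e∗,∞)` implies uniform `h`-noncriticality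
on `[e∗,∞)`. -/
theorem statement15 {J : Set ℝ} {h hinv : ℝ → ℝ} (hgr : GrowthRate J h hinv)
    {E : Type*} [NormedAddCommGroup E] [NormedSpace ℝ E] [FiniteDimensional ℝ E]
    (Φ : ℝ → ℝ → (E →L[ℝ] E)) (hΦ : IsEvolutionFamily J Φ)
    (hexp : HExpansive J (Set.Ici (estar hinv)) h hinv Φ) :
    UnifHNoncritical J h hinv Φ :=
  statement15_general hgr Φ hexp
end
end
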